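/- For positive integers l ≤ m, n, and k, the number of k-element subsets X of [l,m] containing l with gcd(X ∪ {n}) = 1 equals the sum over common divisors d of l and n of μ(d)·C(⌊m/d⌋ − l/d, k−1). -/

import Mathlib

/-!
Expand the indicator of `gcd (gcd X) n = 1` as `∑_{d ∣ gcd (gcd X) n} μ d`. Every such `d`
divides `gcd l n`, so swapping the sums leaves, for each `d ∣ gcd l n`, the number of
`k`-subsets of `[l, m]` containing `l` whose elements are all multiples of `d`. The multiples
of `d` in `[l, m]` are `l` and the `m / d - l / d` multiples in `(l, m]`, so this number is
`C(m / d - l / d, k - 1)`.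
-/

open Finset
open scoped ArithmeticFunction.Moebius

theorem ArithmeticFunction.sum_divisors_moebius (n : ℕ) :
    ∑ d ∈ n.divisors, (μ d : ℤ) = if n = 1 then 1 else 0 := by
  rw [← coe_mul_zeta_apply, moebius_mul_coe_zeta, one_apply]

theorem card_filter_eq_one_eq_sum_moebius {ι : Type*} (S : Finset ι) (g : ι → ℕ) {N : ℕ}
    (hN : N ≠ 0) (hg : ∀ i ∈ S, g i ∣ N) :
    (#{i ∈ S | g i = 1} : ℤ) = ∑ d ∈ N.divisors, μ d * #{i ∈ S | d ∣ g i} := by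
  calc (#{i ∈ S | g i = 1} : ℤ)
      = ∑ i ∈ S, ∑ d ∈ N.divisors with d ∣ g i, (μ d : ℤ) := by
        rw [card_filter, Nat.cast_sum]
        refine sum_congr rfl fun i hi => ?_
        rw [Nat.divisors_filter_dvd_of_dvd hN (hg i hi), ArithmeticFunction.sum_divisors_moebius]
        split_ifs <;> rfl
    _ = ∑ d ∈ N.divisors, ∑ i ∈ S with d ∣ g i, (μ d : ℤ) := by
        simp only [sum_filter]
        exact sum_comm
    _ = ∑ d ∈ N.divisors, μ d * #{i ∈ S | d ∣ g i} := by
        simp only [sum_const, nsmul_eq_mul, mul_comm]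

theorem Nat.card_Ioc_filter_dvd (d : ℕ) {l m : ℕ} (hlm : l ≤ m) :
    #{x ∈ Ioc l m | d ∣ x} = m / d - l / d := by
  have hdisj : Disjoint {x ∈ Ioc 0 l | d ∣ x} {x ∈ Ioc l m | d ∣ x} :=
    disjoint_filter_filter (Ioc_disjoint_Ioc_of_le le_rfl)
  have h := Nat.Ioc_filter_dvd_card_eq_div m d
  rw [← Ioc_union_Ioc_eq_Ioc (Nat.zero_le l) hlm, filter_union, card_union_of_disjoint hdisj,
    Nat.Ioc_filter_dvd_card_eq_div] at h
  omega

theorem Nat.card_Icc_filter_dvd {d l m : ℕ} (hdl : d ∣ l) (hlm : l ≤ m) :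
    #{x ∈ Icc l m | d ∣ x} = m / d - l / d + 1 := by
  rw [Icc_eq_cons_Ioc hlm, filter_cons_of_pos _ _ _ _ hdl, card_cons, Nat.card_Ioc_filter_dvd d hlm]

theorem Finset.filter_powerset_mem_card_forall {α : Type*} [DecidableEq α] (s : Finset α)
    (a : α) (k : ℕ) (p : α → Prop) [DecidablePred p] :
    {X ∈ s.powerset | a ∈ X ∧ #X = k ∧ ∀ x ∈ X, p x} =
      {X ∈ (s.filter p).powersetCard k | {a} ⊆ X} := by
  ext X
  simp only [mem_filter, mem_powerset, mem_powersetCard, subset_iff, imp_and,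
    forall_and, mem_singleton, forall_eq]
  tauto

theorem stmt8_general (l m n k : ℕ) (hl : 0 < l) (hlm : l ≤ m) (hk : 0 < k) :
    ((((Finset.Icc l m).powerset.filter
        (fun X => l ∈ X ∧ X.card = k ∧ Nat.gcd (X.gcd id) n = 1)).card : ℤ)) =
      ∑ d ∈ (Nat.gcd l n).divisors, (ArithmeticFunction.moebius d) *
        (Nat.choose (m / d - l / d) (k - 1) : ℤ) := by
  have hN : Nat.gcd l n ≠ 0 := (Nat.gcd_pos_of_pos_left n hl).ne'
  set S := {X ∈ (Icc l m).powerset | l ∈ X ∧ #X = k}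
  have hS : {X ∈ (Icc l m).powerset | l ∈ X ∧ #X = k ∧ Nat.gcd (X.gcd id) n = 1} =
      {X ∈ S | Nat.gcd (X.gcd id) n = 1} := by
    simp only [S, filter_filter, and_assoc]
  have hdvd : ∀ X ∈ S, Nat.gcd (X.gcd id) n ∣ Nat.gcd l n := fun X hX =>
    Nat.gcd_dvd_gcd_of_dvd_left n (Finset.gcd_dvd (mem_filter.1 hX).2.1)
  rw [hS, card_filter_eq_one_eq_sum_moebius S _ hN hdvd]
  refine sum_congr rfl fun d hd => ?_
  have hdl : d ∣ l := (Nat.dvd_of_mem_divisors hd).trans (Nat.gcd_dvd_left l n)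
  have hdn : d ∣ n := (Nat.dvd_of_mem_divisors hd).trans (Nat.gcd_dvd_right l n)
  have hmultiples : {X ∈ S | d ∣ Nat.gcd (X.gcd id) n} =
      {X ∈ (Icc l m).powerset | l ∈ X ∧ #X = k ∧ ∀ x ∈ X, d ∣ x} := by
    simp only [S, filter_filter, Nat.dvd_gcd_iff, Finset.dvd_gcd_iff, id, hdn, and_true, and_assoc]
  have hlT : {l} ⊆ {x ∈ Icc l m | d ∣ x} :=
    singleton_subset_iff.2 (mem_filter.2 ⟨left_mem_Icc.2 hlm, hdl⟩)
  rw [hmultiples, filter_powerset_mem_card_forall,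
    card_filter_powersetCard_subset _ _ _ hlT (card_singleton l ▸ hk),
    Nat.card_Icc_filter_dvd hdl hlm, card_singleton, Nat.add_sub_cancel]

theorem stmt8 (l m n k : ℕ) (hl : 0 < l) (hlm : l ≤ m) (hn : 0 < n) (hk : 0 < k) :
    ((((Finset.Icc l m).powerset.filter
        (fun X => l ∈ X ∧ X.card = k ∧ Nat.gcd (X.gcd id) n = 1)).card : ℤ)) =
      ∑ d ∈ (Nat.gcd l n).divisors, (ArithmeticFunction.moebius d) *
        (Nat.choose (m / d - l / d) (k - 1) : ℤ) :=
  stmt8_general l m n k hl hlm hk
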